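/- arXiv:1807.07518 — 6 statements merged into one kernel-verified Lean document; each statement's English description precedes it below -/
import Mathlib

section
/- Let θ ∈ (0, π) be such that θ/(2π) is irrational, and let x be a real number with |x·sin θ| ≤ 1. Then there exist infinitely many positive integers m such that |sin((m+1)θ)/sin θ − x| < 6π/(sin θ · (m+1)). -/
/-!
With `α = θ / 2π` and `φ = arcsin (x sin θ)`, sine being `1`-Lipschitz and `2π`-periodic reduces
the claim to infinitely many `m` with `‖m α - φ / 2π‖ < 3 / m`. Given `N`, take `p / q` in lowest
terms with `|α - p / q| < 1 / q²` and `q > N`: such fractions come arbitrarily close to `α`, while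
none with denominator `≤ N` is closer than `round (N! α) / N!`. Since `p` is invertible modulo
`q`, for any `β` some `n < q` has `n p ≡ round (q β) (mod q)`, and then
`‖n α - β‖ ≤ 1 / q + 1 / 2q`. Applied to `β - (N + 1) α` this gives `m = n + N + 1` with
`N < m < 2q` and `‖m α - β‖ ≤ 3 / 2q < 3 / m`.
-/

open Real

open Nat in
lemma abs_sub_round_factorial_mul_div_le (α : ℝ) {Q : ℕ} {r : ℚ} (hr : r.den ≤ Q) :
    |α - round ((Q ! : ℝ) * α) / Q !| ≤ |α - r| := by
  obtain ⟨c, hc⟩ := Nat.dvd_factorial r.pos hr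
  have hQ : (0 : ℝ) < Q ! := mod_cast Q.factorial_pos
  have hint : (Q ! : ℝ) * r = (c * r.num : ℤ) := by
    rw [hc, Rat.cast_def]
    push_cast
    field_simp
  have hscale (y : ℝ) : |α - y| = |Q ! * α - Q ! * y| / Q ! := by
    rw [← mul_sub, abs_mul, abs_of_pos hQ, mul_div_cancel_left₀ _ hQ.ne']
  rw [hscale, hscale r, mul_div_cancel₀ _ hQ.ne', hint]
  exact div_le_div_of_nonneg_right (round_le _ _) hQ.le

lemma Real.exists_rat_den_gt_abs_sub_lt_one_div_den_sq {α : ℝ} (hα : Irrational α) (Q : ℕ) :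
    ∃ r : ℚ, Q < r.den ∧ |α - r| < 1 / (r.den : ℝ) ^ 2 := by
  obtain ⟨r, hr, hcloser⟩ :=
    exists_rat_abs_sub_lt_and_lt_of_irrational hα (round ((Q.factorial : ℝ) * α) / Q.factorial)
  refine ⟨r, not_le.mp fun hden => ?_, hr⟩
  have := abs_sub_round_factorial_mul_div_le α hden
  push_cast at hcloser
  linarith

lemma exists_nat_lt_den_abs_mul_sub_sub_int_le {α : ℝ} {r : ℚ}
    (hr : |α - r| ≤ 1 / (r.den : ℝ) ^ 2) (β : ℝ) :
    ∃ n < r.den, ∃ j : ℤ, |n * α - β - j| ≤ 3 / (2 * r.den) := by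
  set q := r.den
  have hq : (0 : ℤ) < q := mod_cast r.pos
  have hqR : (0 : ℝ) < q := mod_cast r.pos
  obtain ⟨u, v, huv⟩ : IsCoprime r.num q :=
    Int.isCoprime_iff_gcd_eq_one.mpr (by simpa [Int.gcd] using r.reduced)
  set s := round (q * β)
  set n := (s * u % q).toNat
  have hn : (n : ℤ) = s * u % q := Int.toNat_of_nonneg (Int.emod_nonneg _ hq.ne')
  have hnq : n < q := by have := Int.emod_lt_of_pos (s * u) hq; omega
  -- `n * r.num ≡ s * u * r.num ≡ s (mod q)` since `u` inverts `r.num` modulo `q`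
  set t := -(s * v + s * u / q * r.num)
  have ht : (n : ℤ) * r.num = s + q * t := by
    rw [hn, Int.emod_def]; linear_combination s * huv
  have hsplit : n * α - β - t = n * (α - r) + (s - q * β) / q := by
    have : (n : ℝ) * r.num = s + q * t := mod_cast ht
    rw [Rat.cast_def, mul_sub, ← mul_div_assoc, this]
    field_simp
    ring
  refine ⟨n, hnq, t, ?_⟩
  have h1 : |n * (α - r)| ≤ 1 / q := by
    rw [abs_mul, Nat.abs_cast]
    calc (n : ℝ) * |α - r| ≤ q * (1 / q ^ 2) := by gcongr
      _ = 1 / q := by field_simp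
  have h2 : |(s - q * β) / q| ≤ 1 / 2 / q := by
    rw [abs_div, abs_of_pos hqR, abs_sub_comm]
    gcongr
    exact abs_sub_round _
  calc |n * α - β - t| ≤ |n * (α - r)| + |(s - q * β) / q| := hsplit ▸ abs_add_le _ _
    _ ≤ 1 / q + 1 / 2 / q := add_le_add h1 h2
    _ = 3 / (2 * q) := by field_simp; norm_num

lemma Real.exists_nat_gt_abs_mul_sub_sub_int_lt {α : ℝ} (hα : Irrational α) (β : ℝ) (N : ℕ) :
    ∃ m > N, ∃ j : ℤ, |m * α - β - j| < 3 / m := by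
  obtain ⟨r, hNr, hr⟩ := exists_rat_den_gt_abs_sub_lt_one_div_den_sq hα N
  obtain ⟨n, hn, j, hj⟩ := exists_nat_lt_den_abs_mul_sub_sub_int_le hr.le (β - (N + 1) * α)
  refine ⟨n + N + 1, by omega, j, ?_⟩
  have hm : ((n + N + 1 : ℕ) : ℝ) < 2 * r.den := by
    exact_mod_cast (by omega : n + N + 1 < 2 * r.den)
  calc |((n + N + 1 : ℕ) : ℝ) * α - β - j| = |n * α - (β - (N + 1) * α) - j| := by
        congr 1; push_cast; ring
    _ ≤ 3 / (2 * r.den) := hj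
    _ < 3 / ((n + N + 1 : ℕ) : ℝ) := by gcongr

/-- Let `θ ∈ (0, π)` be such that `θ/(2π)` is irrational, and let `x` be a real
number with `|x·sin θ| ≤ 1`. Then there exist infinitely many positive integers `m` such that
`|sin((m+1)θ)/sin θ − x| < 6π/(sin θ·(m+1))`. -/
theorem statement0 (θ x : ℝ) (hθ : θ ∈ Set.Ioo 0 π)
    (hirr : Irrational (θ / (2 * π))) (hx : |x * Real.sin θ| ≤ 1) :
    {m : ℕ | 0 < m ∧
      |Real.sin ((m + 1) * θ) / Real.sin θ - x| < 6 * π / (Real.sin θ * (m + 1))}.Infinite := by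
  have hsinθ : 0 < sin θ := sin_pos_of_pos_of_lt_pi hθ.1 hθ.2
  set φ := arcsin (x * sin θ)
  have hφ : sin φ = x * sin θ := sin_arcsin (neg_le_of_abs_le hx) (le_of_abs_le hx)
  refine Set.infinite_of_forall_exists_gt fun a => ?_
  obtain ⟨n, hn, j, hj⟩ := exists_nat_gt_abs_mul_sub_sub_int_lt hirr (φ / (2 * π)) (a + 1)
  obtain ⟨m, rfl⟩ := Nat.exists_eq_add_one_of_ne_zero (by omega : n ≠ 0)
  refine ⟨m, ⟨by omega, ?_⟩, by omega⟩
  push_cast at hj ⊢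
  have hangle : |(m + 1) * θ - φ - j * (2 * π)| < 6 * π / (m + 1) := by
    have h2π : 0 < 2 * π := by positivity
    calc |(m + 1) * θ - φ - j * (2 * π)|
        = |(m + 1) * (θ / (2 * π)) - φ / (2 * π) - j| * (2 * π) := by
          rw [← abs_of_pos h2π, ← abs_mul, abs_of_pos h2π]; congr 1; field_simp
      _ < 3 / (m + 1) * (2 * π) := by gcongr
      _ = 6 * π / (m + 1) := by ring
  have hsin : |sin ((m + 1) * θ) - sin θ * x| < 6 * π / (m + 1) := by
    calc |sin ((m + 1) * θ) - sin θ * x|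
        = |sin ((m + 1) * θ - j * (2 * π)) - sin φ| := by
          rw [sin_sub_int_mul_two_pi, hφ, mul_comm x]
      _ ≤ |(m + 1) * θ - j * (2 * π) - φ| := abs_sin_sub_sin_le _ _
      _ < 6 * π / (m + 1) := by rwa [sub_right_comm]
  rw [div_sub' hsinθ.ne', abs_div, abs_of_pos hsinθ, div_lt_iff₀ hsinθ]
  calc |sin ((m + 1) * θ) - sin θ * x| < 6 * π / (m + 1) := hsin
    _ = 6 * π / (sin θ * (m + 1)) * sin θ := by field_simp
end

section
/- Let α be an irrational real number that is badly approximable, i.e. there exists c > 0 such that ‖n·α‖ > c/n for all positive integers n, and let q_r denote the denominator of the r-th convergent of the simple continued fraction expansion of α. If φ : ℕ → (0, ∞) is decreasing with ∑_{n=1}^∞ φ(n) = ∞, then ∑_{r=0}^∞ ∑_{n=q_r}^{q_{r+1}−1} min(φ(n), ‖q_r·α‖) = ∞. -/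
/-!
For `q_r ≤ n`, bad approximability gives `c / n ≤ c / q_r < ‖q_r α‖`, so the `r`-th block
sum dominates `∑_{q_r ≤ n < q_{r+1}} min (φ n, c / n)`. The denominators increase to infinity, so
the blocks tile a tail of `ℕ` and it suffices that `∑ min (φ n, c / n)` diverges. By Cauchy
condensation this is the series `∑ min (2^k φ(2^k), c)`, which can only converge if its terms
eventually equal `2^k φ(2^k)`, i.e. if the condensed series of `φ` converges.
-/

open Filter Finset

theorem Summable.of_min_const {ι : Type*} {a : ι → ℝ} {c : ℝ} (hc : 0 < c)
    (h : Summable fun i => min (a i) c) : Summable a := by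
  refine h.congr_cofinite ?_
  filter_upwards [h.tendsto_cofinite_zero.eventually_lt_const hc] with i hi
  exact min_eq_left ((min_lt_iff.1 hi).resolve_right (lt_irrefl c)).le

theorem not_summable_min_div_of_antitone {φ : ℕ → ℝ} {c : ℝ}
    (hφ_nonneg : ∀ n, 0 ≤ φ n) (hφ_anti : Antitone φ) (hφ : ¬ Summable φ) (hc : 0 < c) :
    ¬ Summable fun n : ℕ => min (φ n) (c / n) := by
  intro h
  have h_nonneg (n : ℕ) : 0 ≤ min (φ n) (c / n) := le_min (hφ_nonneg n) (by positivity)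
  have h_anti ⦃m n : ℕ⦄ (hm : 0 < m) (hmn : m ≤ n) :
      min (φ n) (c / n) ≤ min (φ m) (c / m) :=
    min_le_min (hφ_anti hmn) (div_le_div_of_nonneg_left hc.le (by exact_mod_cast hm)
      (by exact_mod_cast hmn))
  have h_condensed (k : ℕ) :
      (2 : ℝ) ^ k * min (φ (2 ^ k)) (c / ((2 ^ k : ℕ) : ℝ)) =
        min ((2 : ℝ) ^ k * φ (2 ^ k)) c := by
    rw [mul_min_of_nonneg _ _ (by positivity), Nat.cast_pow, Nat.cast_ofNat,
      mul_div_cancel₀ _ (by positivity)]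
  refine hφ ((summable_condensed_iff_of_nonneg hφ_nonneg fun _ _ _ hmn => hφ_anti hmn).1 ?_)
  refine Summable.of_min_const hc ?_
  simpa only [h_condensed] using (summable_condensed_iff_of_nonneg h_nonneg h_anti).2 h

theorem sum_range_eq_add_sum_range_sum_Ico {M : Type*} [AddCommMonoid M] (g : ℕ → M)
    {q : ℕ → ℕ} (hq : Monotone q) (R : ℕ) :
    ∑ n ∈ range (q R), g n =
      ∑ n ∈ range (q 0), g n + ∑ r ∈ range R, ∑ n ∈ Ico (q r) (q (r + 1)), g n := by
  induction R with
  | zero => simp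
  | succ R ih =>
    rw [sum_range_succ, ← add_assoc, ← ih, sum_range_add_sum_Ico _ (hq R.le_succ)]

theorem Summable.of_sum_Ico {g : ℕ → ℝ} (hg : ∀ n, 0 ≤ g n) {q : ℕ → ℕ}
    (hq : Monotone q) (hq_top : Tendsto q atTop atTop)
    (h : Summable fun r => ∑ n ∈ Ico (q r) (q (r + 1)), g n) : Summable g := by
  refine summable_of_sum_range_le hg
    (c := ∑ n ∈ range (q 0), g n + ∑' r, ∑ n ∈ Ico (q r) (q (r + 1)), g n) fun N => ?_
  obtain ⟨R, hR⟩ := (hq_top.eventually_ge_atTop N).exists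
  calc ∑ n ∈ range N, g n ≤ ∑ n ∈ range (q R), g n :=
        sum_le_sum_of_subset_of_nonneg (range_subset_range.2 hR) fun n _ _ => hg n
    _ = _ := sum_range_eq_add_sum_range_sum_Ico g hq R
    _ ≤ _ := by gcongr; exact h.sum_le_tsum _ fun r _ => sum_nonneg fun n _ => hg n

namespace GenContFract

theorem monotone_dens_of (α : ℝ) : Monotone (GenContFract.of α).dens :=
  monotone_nat_of_le_succ fun _ => of_den_mono

theorem one_le_dens_of (α : ℝ) (r : ℕ) : 1 ≤ (GenContFract.of α).dens r :=
  zeroth_den_eq_one (g := GenContFract.of α) ▸ monotone_dens_of α r.zero_le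

theorem tendsto_dens_of_irrational {α : ℝ} (hα : Irrational α) :
    Tendsto (GenContFract.of α).dens atTop atTop := by
  have h_nonterm (r : ℕ) : ¬ (GenContFract.of α).TerminatedAt r := fun hr =>
    have ⟨x, hx⟩ := (terminates_iff_rat α).1 ⟨r, hr⟩
    hα ⟨x, hx.symm⟩
  refine tendsto_atTop_mono (fun r => ?_)
    (tendsto_atTop_add_const_right _ (-1 : ℝ) tendsto_natCast_atTop_atTop)
  have h_fib : (Nat.fib (r + 1) : ℝ) ≤ (GenContFract.of α).dens r :=
    succ_nth_fib_le_of_nth_den (Or.inr (h_nonterm _))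
  have h_le : (r : ℝ) ≤ Nat.fib (r + 1) + 1 := by
    exact_mod_cast (Nat.le_fib_add_one r).trans (Nat.add_le_add_right (Nat.fib_mono r.le_succ) 1)
  linarith

end GenContFract

/-- Let `α` be an irrational real number that is badly approximable, i.e. there
exists `c > 0` such that `‖n·α‖ > c/n` for all positive integers `n` (where `‖·‖` is the
distance to a nearest integer), and let `q r` denote the denominator of the `r`-th convergent
of the simple continued fraction expansion of `α`. If `φ : ℕ → (0, ∞)` is decreasing with
`∑ φ(n) = ∞`, then `∑_{r} ∑_{n=q_r}^{q_{r+1}−1} min(φ(n), ‖q_r·α‖) = ∞`. -/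
theorem statement7 (α : ℝ) (hirr : Irrational α) (c : ℝ) (hc : 0 < c)
    (hbad : ∀ n : ℕ, 0 < n → c / n < |(n : ℝ) * α - round ((n : ℝ) * α)|)
    (φ : ℕ → ℝ) (hφpos : ∀ n, 0 < φ n) (hφmono : Antitone φ) (hφdiv : ¬ Summable φ)
    (q : ℕ → ℕ) (hq : ∀ r, (q r : ℝ) = (GenContFract.of α).dens r) :
    ¬ Summable (fun r : ℕ => ∑ n ∈ Finset.Ico (q r) (q (r + 1)),
      min (φ n) |(q r : ℝ) * α - round ((q r : ℝ) * α)|) := by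
  have hq_mono : Monotone q := fun a b hab => by
    exact_mod_cast (hq a ▸ hq b ▸ GenContFract.monotone_dens_of α hab)
  have hq_pos (r : ℕ) : 0 < q r := by
    exact_mod_cast (hq r ▸ GenContFract.one_le_dens_of α r)
  have hq_top : Tendsto q atTop atTop := tendsto_natCast_atTop_iff.1 <|
    (funext hq).symm ▸ GenContFract.tendsto_dens_of_irrational hirr
  have h_nonneg (n : ℕ) : 0 ≤ min (φ n) (c / n) := le_min (hφpos n).le (by positivity)
  have h_block (r n : ℕ) (hn : n ∈ Ico (q r) (q (r + 1))) :
      min (φ n) (c / n) ≤ min (φ n) |(q r : ℝ) * α - round ((q r : ℝ) * α)| := by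
    have hqn : (q r : ℝ) ≤ n := by exact_mod_cast (mem_Ico.1 hn).1
    have hq_pos' : (0 : ℝ) < q r := by exact_mod_cast hq_pos r
    exact min_le_min le_rfl
      ((div_le_div_of_nonneg_left hc.le hq_pos' hqn).trans (hbad _ (hq_pos r)).le)
  intro hsum
  refine not_summable_min_div_of_antitone (fun n => (hφpos n).le) hφmono hφdiv hc ?_
  refine .of_sum_Ico h_nonneg hq_mono hq_top ?_
  exact hsum.of_nonneg_of_le (fun r => sum_nonneg fun n _ => h_nonneg n)
    fun r => sum_le_sum (h_block r)
end

section
/- Let θ ∈ (0, π) be such that θ/(2π) is badly approximable, i.e. there exists c > 0 with ‖n·θ/(2π)‖ > c/n for all positive integers n, and let φ : ℕ → (0, ∞) be decreasing with ∑_{n=1}^∞ φ(n) = ∞. Then for Lebesgue-almost every x in the interval (−1/sin θ, 1/sin θ) there are infinitely many positive integers m with |sin((m+1)θ)/sin θ − x| < (2π/sin θ)·φ(m). -/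
/-!
Put `α = θ / (2π)`, so that `sin ((m + 1) θ) = sin (2π (m + 1) α)`. The heart of the matter is
a Kurzweil-type statement on the circle `ℝ/ℤ`: for antitone `ψ` with `∑ ψ = ∞`, almost every
`y` lies in infinitely many of the balls `E n = B(n • α, ψ n)`. Bad approximability makes these
balls quasi-independent: the indices `m > n` with `E m ∩ E n ≠ ∅` are pairwise at least
`c / (4 ψ n)` apart, so `∑_{m > n} |E m ∩ E n| ≲ ψ n ∑ ψ / c`. The Paley–Zygmund inequality for
the counting function `∑_{n < N} 1_{E n}` (the Kochen–Stone argument) then gives the limsup set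
positive measure; as its preimage under the rotation by `α` lies inside it and that rotation is
ergodic (`α` is irrational), it has full measure. Finally `x ↦ arcsin (x sin θ) / (2π)` pulls this back to
the interval, because its inverse `t ↦ sin (2πt) / sin θ` is smooth and so maps null sets to
null sets.
-/

open Real MeasureTheory Metric Filter Finset
open scoped ENNReal Topology

theorem mul_sum_le_sum_range_of_separated {ψ : ℕ → ℝ} (hψ : Antitone ψ) (hψ0 : ∀ i, 0 ≤ ψ i)
    {N L : ℕ} {K : Finset ℕ} (hK : K ⊆ range N) (hL : ∀ k ∈ K, L ≤ k)
    (hsep : ∀ k ∈ K, ∀ k' ∈ K, k < k' → L ≤ k' - k) :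
    L * ∑ k ∈ K, ψ k ≤ ∑ i ∈ range N, ψ i := by
  -- each `k ∈ K` owns the block `(k - L, k]`, on which `ψ ≥ ψ k`
  have hdisj : (K : Set ℕ).PairwiseDisjoint fun k => Ioc (k - L) k := by
    intro k hk k' hk' hne
    rw [Function.onFun, Finset.disjoint_left]
    intro i hi hi'
    rw [mem_Ioc] at hi hi'
    rcases hne.lt_or_gt with h | h
    · have := hsep k hk k' hk' h; omega
    · have := hsep k' hk' k hk h; omega
  have hsub : K.biUnion (fun k => Ioc (k - L) k) ⊆ range N := by
    intro i hi
    obtain ⟨k, hk, hik⟩ := mem_biUnion.1 hi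
    have := mem_range.1 (hK hk)
    rw [mem_Ioc] at hik
    exact mem_range.2 (by omega)
  calc (L : ℝ) * ∑ k ∈ K, ψ k = ∑ k ∈ K, ∑ _i ∈ Ioc (k - L) k, ψ k := by
        rw [mul_sum]
        refine sum_congr rfl fun k hk => ?_
        rw [sum_const, Nat.card_Ioc, Nat.sub_sub_self (hL k hk), nsmul_eq_mul]
    _ ≤ ∑ k ∈ K, ∑ i ∈ Ioc (k - L) k, ψ i :=
        sum_le_sum fun k _ => sum_le_sum fun i hi => hψ (mem_Ioc.1 hi).2
    _ = ∑ i ∈ K.biUnion (fun k => Ioc (k - L) k), ψ i := (sum_biUnion hdisj).symm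
    _ ≤ ∑ i ∈ range N, ψ i := sum_le_sum_of_subset_of_nonneg hsub fun i _ _ => hψ0 i

theorem sum_sum_eq_sum_add_two_nsmul_sum_sum_lt {M : Type*} [AddCommMonoid M] (s : Finset ℕ)
    (f : ℕ → ℕ → M) (hf : ∀ m n, f m n = f n m) :
    ∑ m ∈ s, ∑ n ∈ s, f m n = ∑ n ∈ s, f n n + 2 • ∑ n ∈ s, ∑ m ∈ s with n < m, f m n := by
  have hsplit : ∀ m n, f m n = (if m = n then f m n else 0) +
      ((if n < m then f m n else 0) + if m < n then f m n else 0) := by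
    intro m n
    rcases lt_trichotomy m n with h | rfl | h
    · simp [h, h.ne, h.not_gt]
    · simp
    · simp [h, h.ne', h.not_gt]
  simp_rw [sum_filter, two_nsmul]
  conv_lhs => rw [sum_congr rfl fun m _ => sum_congr rfl fun n _ => hsplit m n]
  simp only [sum_add_distrib, sum_ite_eq]
  congr 1
  · exact sum_congr rfl fun n hn => if_pos hn
  · congr 1
    · exact sum_comm
    · exact sum_congr rfl fun m _ => sum_congr rfl fun n _ => by rw [hf]

theorem frequently_mem_of_frequently_lt_two_mul_sum_indicator {Ω : Type*} {E : ℕ → Set Ω}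
    {S : ℕ → ℝ≥0∞} (hS : Tendsto S atTop (𝓝 ∞)) {x : Ω}
    (hx : ∃ᶠ N in atTop, S N < 2 * ∑ n ∈ range N, (E n).indicator 1 x) :
    ∃ᶠ n in atTop, x ∈ E n := by
  by_contra hfin
  obtain ⟨n₀, hn₀⟩ := eventually_atTop.1 (not_frequently.1 hfin)
  have hbound : ∀ N, ∑ n ∈ range N, (E n).indicator (1 : Ω → ℝ≥0∞) x ≤ n₀ := fun N =>
    calc ∑ n ∈ range N, (E n).indicator 1 x ≤ ∑ n ∈ range n₀, (E n).indicator (1 : Ω → ℝ≥0∞) x :=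
          sum_le_sum_of_ne_zero fun n _ hn => mem_range.2 <| by
            by_contra h
            exact hn (Set.indicator_of_notMem (hn₀ n (not_lt.1 h)) _)
      _ ≤ ∑ _n ∈ range n₀, 1 := sum_le_sum fun n _ => Set.indicator_le_self (E n) 1 x
      _ = n₀ := by simp
  obtain ⟨N, hxN, hN⟩ := (hx.and_eventually (hS.eventually_const_lt
    (ENNReal.mul_lt_top (ENNReal.ofNat_lt_top (n := 2)) (ENNReal.natCast_lt_top n₀)))).exists
  exact (hxN.trans_le (by gcongr; exact hbound N)).not_gt hN

section Measure

variable {Ω : Type*} [MeasurableSpace Ω] {μ : Measure Ω}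

theorem sq_setLIntegral_le {f : Ω → ℝ≥0∞} (hf : Measurable f) (A : Set Ω) :
    (∫⁻ x in A, f x ∂μ) ^ 2 ≤ (∫⁻ x in A, f x ^ 2 ∂μ) * μ A := by
  have h := ENNReal.lintegral_mul_le_Lp_mul_Lq (μ.restrict A) Real.HolderConjugate.two_two
    hf.aemeasurable (aemeasurable_const (b := (1 : ℝ≥0∞)))
  simp only [Pi.mul_apply, mul_one, ENNReal.one_rpow, lintegral_const, Measure.restrict_apply_univ,
    one_mul] at h
  calc (∫⁻ x in A, f x ∂μ) ^ 2
      ≤ ((∫⁻ x in A, f x ^ (2 : ℝ) ∂μ) ^ (1 / 2 : ℝ) * μ A ^ (1 / 2 : ℝ)) ^ 2 := by gcongr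
    _ = (∫⁻ x in A, f x ^ 2 ∂μ) * μ A := by
      rw [mul_pow, ← ENNReal.rpow_natCast, ← ENNReal.rpow_natCast (_ ^ _), ← ENNReal.rpow_mul,
        ← ENNReal.rpow_mul]
      norm_num

theorem paley_zygmund [IsProbabilityMeasure μ] {f : Ω → ℝ≥0∞} (hf : Measurable f)
    (hfin : ∫⁻ x, f x ∂μ ≠ ∞) :
    (∫⁻ x, f x ∂μ) ^ 2 ≤ 4 * (∫⁻ x, f x ^ 2 ∂μ) * μ {x | ∫⁻ x, f x ∂μ < 2 * f x} := by
  set I := ∫⁻ x, f x ∂μ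
  set A := {x | I < 2 * f x}
  have hA : MeasurableSet A := measurableSet_lt measurable_const (hf.const_mul 2)
  have hAc : ∫⁻ x in Aᶜ, f x ∂μ ≤ I / 2 := by
    calc ∫⁻ x in Aᶜ, f x ∂μ ≤ ∫⁻ _ in Aᶜ, I / 2 ∂μ := by
          refine setLIntegral_mono measurable_const fun x hx => ?_
          rw [ENNReal.le_div_iff_mul_le (by simp) (by simp), mul_comm]
          exact not_lt.1 hx
      _ ≤ I / 2 := by
          rw [setLIntegral_const]
          exact mul_le_of_le_one_right' prob_le_one
  have hhalf : I / 2 ≤ ∫⁻ x in A, f x ∂μ := by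
    have : I / 2 + I / 2 ≤ ∫⁻ x in A, f x ∂μ + I / 2 :=
      calc I / 2 + I / 2 = ∫⁻ x in A, f x ∂μ + ∫⁻ x in Aᶜ, f x ∂μ := by
            rw [ENNReal.add_halves, lintegral_add_compl f hA]
        _ ≤ ∫⁻ x in A, f x ∂μ + I / 2 := by gcongr
    exact (ENNReal.add_le_add_iff_right (ENNReal.div_ne_top hfin two_ne_zero)).1 this
  calc I ^ 2 = 4 * (I / 2) ^ 2 := by
        conv_lhs => rw [← ENNReal.mul_div_cancel (a := 2) two_ne_zero ENNReal.ofNat_ne_top (b := I)]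
        ring
    _ ≤ 4 * ((∫⁻ x in A, f x ^ 2 ∂μ) * μ A) := by
        gcongr
        exact (pow_le_pow_left₀ bot_le hhalf 2).trans (sq_setLIntegral_le hf A)
    _ ≤ 4 * (∫⁻ x, f x ^ 2 ∂μ) * μ A := by
        rw [← mul_assoc]
        gcongr
        exact Measure.restrict_le_self

theorem lintegral_sq_sum_indicator_one {ι : Type*} {E : ι → Set Ω}
    (hE : ∀ i, MeasurableSet (E i)) (s : Finset ι) :
    ∫⁻ x, (∑ i ∈ s, (E i).indicator 1 x) ^ 2 ∂μ = ∑ i ∈ s, ∑ j ∈ s, μ (E i ∩ E j) := by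
  have hsq : ∀ x, (∑ i ∈ s, (E i).indicator 1 x) ^ 2
      = ∑ i ∈ s, ∑ j ∈ s, (E i ∩ E j).indicator (1 : Ω → ℝ≥0∞) x := fun x => by
    simp_rw [sq, sum_mul_sum, Set.inter_indicator_one, Pi.mul_apply]
  simp_rw [hsq]
  have hmeas : ∀ i j, MeasurableSet (E i ∩ E j) := fun i j => (hE i).inter (hE j)
  rw [lintegral_finsetSum _ fun i _ => Finset.measurable_sum _ fun j _ =>
    measurable_one.indicator (hmeas i j)]
  refine sum_congr rfl fun i _ => ?_
  rw [lintegral_finsetSum _ fun j _ => measurable_one.indicator (hmeas i j)]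
  exact sum_congr rfl fun j _ => lintegral_indicator_one (hmeas i j)

theorem inv_four_mul_le_measure_lt_two_mul_sum_indicator [IsProbabilityMeasure μ] {ι : Type*}
    {E : ι → Set Ω} (hE : ∀ i, MeasurableSet (E i)) {s : Finset ι} {C : ℝ≥0∞}
    (hS : 0 < ∑ i ∈ s, μ (E i))
    (hC : ∑ i ∈ s, ∑ j ∈ s, μ (E i ∩ E j) ≤ C * (∑ i ∈ s, μ (E i)) ^ 2) :
    (4 * C)⁻¹ ≤ μ {x | ∑ i ∈ s, μ (E i) < 2 * ∑ i ∈ s, (E i).indicator 1 x} := by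
  set S := ∑ i ∈ s, μ (E i)
  have hSfin : S ≠ ∞ := ENNReal.sum_ne_top.2 fun i _ => measure_ne_top μ (E i)
  have hint : ∫⁻ x, ∑ i ∈ s, (E i).indicator 1 x ∂μ = S := by
    rw [lintegral_finsetSum _ fun i _ => measurable_one.indicator (hE i)]
    exact sum_congr rfl fun i _ => lintegral_indicator_one (hE i)
  have hPZ := paley_zygmund (μ := μ)
    (Finset.measurable_sum _ fun i _ => measurable_one.indicator (hE i)) (hint.trans_ne hSfin)
  rw [hint, lintegral_sq_sum_indicator_one hE] at hPZ
  set A := {x | S < 2 * ∑ i ∈ s, (E i).indicator 1 x}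
  have h1 : 1 ≤ 4 * C * μ A := by
    refine (ENNReal.mul_le_mul_iff_left (pow_ne_zero 2 hS.ne') (ENNReal.pow_ne_top hSfin)).1 ?_
    calc 1 * S ^ 2 ≤ 4 * (C * S ^ 2) * μ A := by rw [one_mul]; exact hPZ.trans (by gcongr)
      _ = 4 * C * μ A * S ^ 2 := by ring
  exact (ENNReal.inv_le_iff_le_mul (fun h => absurd h (measure_ne_top μ _))
    fun _ h0 => by simp [h0] at h1).2 h1

theorem le_measure_setOf_frequently_mem [IsFiniteMeasure μ] {s : ℕ → Set Ω}
    (hs : ∀ n, MeasurableSet (s n)) {γ : ℝ≥0∞} (h : ∃ᶠ n in atTop, γ ≤ μ (s n)) :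
    γ ≤ μ {x | ∃ᶠ n in atTop, x ∈ s n} := by
  have hlim : {x | ∃ᶠ n in atTop, x ∈ s n} = ⋂ n, ⋃ i ≥ n, s i := by
    ext x
    simp [frequently_atTop]
  rw [hlim, Antitone.measure_iInter]
  · refine le_iInf fun n => ?_
    obtain ⟨i, hi, hγ⟩ := h.forall_exists_of_atTop n
    exact hγ.trans (measure_mono (Set.subset_biUnion_of_mem (u := s) hi))
  · exact fun m n hmn => Set.biUnion_mono (fun i hi => le_trans hmn hi) fun _ _ => le_rfl
  · exact fun n => (MeasurableSet.biUnion (Set.to_countable _) fun i _ => hs i).nullMeasurableSet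
  · exact ⟨0, measure_ne_top _ _⟩

theorem inv_four_mul_le_measure_setOf_frequently_mem [IsProbabilityMeasure μ]
    {E : ℕ → Set Ω} (hE : ∀ n, MeasurableSet (E n))
    (hdiv : Tendsto (fun N => ∑ n ∈ range N, μ (E n)) atTop (𝓝 ∞)) {C : ℝ≥0∞}
    (hC : ∀ᶠ N in atTop,
      ∑ m ∈ range N, ∑ n ∈ range N, μ (E m ∩ E n) ≤ C * (∑ n ∈ range N, μ (E n)) ^ 2) :
    (4 * C)⁻¹ ≤ μ {x | ∃ᶠ n in atTop, x ∈ E n} := by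
  have hA : ∀ᶠ N in atTop, (4 * C)⁻¹ ≤
      μ {x | ∑ n ∈ range N, μ (E n) < 2 * ∑ n ∈ range N, (E n).indicator 1 x} := by
    filter_upwards [hC, hdiv.eventually_const_lt ENNReal.zero_lt_top] with N hQ hS
    exact inv_four_mul_le_measure_lt_two_mul_sum_indicator hE hS hQ
  refine (le_measure_setOf_frequently_mem (fun N => measurableSet_lt measurable_const
    ((Finset.measurable_sum _ fun n _ => measurable_one.indicator (hE n)).const_mul 2))
    hA.frequently).trans (measure_mono fun x hx => ?_)
  exact frequently_mem_of_frequently_lt_two_mul_sum_indicator hdiv hx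

end Measure

section BadlyApproximable

variable {G : Type*} [SeminormedAddCommGroup G] {a : G} {c : ℝ}

theorem dist_nsmul_nsmul_eq_norm (a : G) {m n : ℕ} (h : n ≤ m) :
    dist (m • a) (n • a) = ‖(m - n) • a‖ := by
  rw [dist_eq_norm, sub_nsmul a h, sub_eq_add_neg]

theorem ceil_div_le_of_norm_nsmul_le (hbad : ∀ k : ℕ, 0 < k → c / k < ‖k • a‖) {r : ℝ}
    (hr : 0 < r) {k : ℕ} (hk : 0 < k) (h : ‖k • a‖ ≤ r) : ⌈c / r⌉₊ ≤ k := by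
  have hck : c / k < r := (hbad k hk).trans_le h
  rw [div_lt_iff₀ (Nat.cast_pos.2 hk)] at hck
  exact Nat.ceil_le.2 ((div_le_iff₀ hr).2 (by linarith))

theorem mul_sum_le_of_dist_nsmul_le (hbad : ∀ k : ℕ, 0 < k → c / k < ‖k • a‖)
    {ψ : ℕ → ℝ} (hpos : ∀ n, 0 < ψ n) (hanti : Antitone ψ) (N n : ℕ) :
    c * ∑ m ∈ range N with n < m ∧ dist (m • a) (n • a) ≤ 2 * ψ n, ψ m
      ≤ 4 * ψ n * ∑ i ∈ range N, ψ i := by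
  set D := {m ∈ range N | n < m ∧ dist (m • a) (n • a) ≤ 2 * ψ n}
  set L := ⌈c / (4 * ψ n)⌉₊
  have hr : 0 < 4 * ψ n := by linarith [hpos n]
  have hL : ∀ k ∈ D, L ≤ k := by
    intro k hk
    obtain ⟨-, hnk, hdist⟩ := mem_filter.1 hk
    rw [dist_nsmul_nsmul_eq_norm a hnk.le] at hdist
    have := ceil_div_le_of_norm_nsmul_le hbad hr (Nat.sub_pos_of_lt hnk) (by linarith [hpos n])
    omega
  have hsep : ∀ k ∈ D, ∀ k' ∈ D, k < k' → L ≤ k' - k := by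
    intro k hk k' hk' hkk'
    refine ceil_div_le_of_norm_nsmul_le hbad hr (Nat.sub_pos_of_lt hkk') ?_
    rw [← dist_nsmul_nsmul_eq_norm a hkk'.le]
    linarith [dist_triangle_right (k' • a) (k • a) (n • a), (mem_filter.1 hk).2.2,
      (mem_filter.1 hk').2.2]
  have hsum := mul_sum_le_sum_range_of_separated hanti (fun i => (hpos i).le)
    (filter_subset _ _) hL hsep
  have hceil : c ≤ 4 * ψ n * L := (div_le_iff₀' hr).1 (Nat.le_ceil _)
  calc c * ∑ k ∈ D, ψ k ≤ 4 * ψ n * L * ∑ k ∈ D, ψ k :=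
        mul_le_mul_of_nonneg_right hceil (sum_nonneg fun i _ => (hpos i).le)
    _ ≤ 4 * ψ n * ∑ i ∈ range N, ψ i := by rw [mul_assoc]; gcongr

end BadlyApproximable

theorem UnitAddCircle.volume_closedBall_of_le_half (x : UnitAddCircle) {r : ℝ} (hr : r ≤ 1 / 2) :
    volume (closedBall x r) = ENNReal.ofReal (2 * r) := by
  rw [AddCircle.volume_closedBall, min_eq_right (by linarith)]

section Circle

variable {a : UnitAddCircle} {c : ℝ} {ψ : ℕ → ℝ}

theorem sum_volume_closedBall_nsmul_inter_le (hc : 0 < c)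
    (hbad : ∀ k : ℕ, 0 < k → c / k < ‖k • a‖) (hpos : ∀ n, 0 < ψ n) (hanti : Antitone ψ)
    (N n : ℕ) :
    ∑ m ∈ range N with n < m, volume (closedBall (m • a) (ψ m) ∩ closedBall (n • a) (ψ n))
      ≤ ENNReal.ofReal (8 / c * ψ n * ∑ i ∈ range N, ψ i) := by
  set D := {m ∈ range N | n < m ∧ dist (m • a) (n • a) ≤ 2 * ψ n}
  have hD := mul_sum_le_of_dist_nsmul_le hbad hpos hanti N n
  calc ∑ m ∈ range N with n < m, volume (closedBall (m • a) (ψ m) ∩ closedBall (n • a) (ψ n))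
      = ∑ m ∈ D, volume (closedBall (m • a) (ψ m) ∩ closedBall (n • a) (ψ n)) := by
        refine (sum_subset (fun m hm => ?_) fun m hm hmD => ?_).symm
        · simp only [D, mem_filter] at hm ⊢
          exact ⟨hm.1, hm.2.1⟩
        · -- outside `D` the balls are disjoint, as `ψ m ≤ ψ n`
          simp only [D, mem_filter, not_and, not_le] at hm hmD
          have hdisj := closedBall_disjoint_closedBall (x := m • a) (y := n • a)
            (δ := ψ m) (ε := ψ n) (by linarith [hanti hm.2.le, hmD hm.1 hm.2])
          rw [Set.disjoint_iff_inter_eq_empty.1 hdisj, measure_empty]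
    _ ≤ ∑ m ∈ D, ENNReal.ofReal (2 * ψ m) := by
        refine sum_le_sum fun m _ => (measure_mono Set.inter_subset_left).trans ?_
        rw [AddCircle.volume_closedBall]
        exact ENNReal.ofReal_le_ofReal (min_le_right _ _)
    _ = ENNReal.ofReal (2 * ∑ m ∈ D, ψ m) := by
        rw [← ENNReal.ofReal_sum_of_nonneg fun m _ => by linarith [hpos m], mul_sum]
    _ ≤ ENNReal.ofReal (8 / c * ψ n * ∑ i ∈ range N, ψ i) := by
        refine ENNReal.ofReal_le_ofReal ?_
        rw [mul_assoc, div_mul_eq_mul_div, le_div_iff₀ hc]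
        linarith

theorem sum_sum_volume_closedBall_nsmul_inter_le (hc : 0 < c)
    (hbad : ∀ k : ℕ, 0 < k → c / k < ‖k • a‖) (hpos : ∀ n, 0 < ψ n) (hanti : Antitone ψ)
    (hhalf : ∀ n, ψ n ≤ 1 / 2) {N : ℕ} (hN : 1 / 2 ≤ ∑ n ∈ range N, ψ n) :
    ∑ m ∈ range N, ∑ n ∈ range N, volume (closedBall (m • a) (ψ m) ∩ closedBall (n • a) (ψ n))
      ≤ (1 + ENNReal.ofReal (4 / c)) * (∑ n ∈ range N, volume (closedBall (n • a) (ψ n))) ^ 2 := by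
  set T := ∑ n ∈ range N, ψ n
  have hψ0 : ∀ n, 0 ≤ ψ n := fun n => (hpos n).le
  have hT0 : 0 ≤ T := by linarith
  have hS : ∑ n ∈ range N, volume (closedBall (n • a) (ψ n)) = ENNReal.ofReal (2 * T) := by
    rw [mul_sum, ENNReal.ofReal_sum_of_nonneg fun n _ => by linarith [hψ0 n]]
    exact sum_congr rfl fun n _ => UnitAddCircle.volume_closedBall_of_le_half _ (hhalf n)
  rw [sum_sum_eq_sum_add_two_nsmul_sum_sum_lt (range N)
    (fun m n => volume (closedBall (m • a) (ψ m) ∩ closedBall (n • a) (ψ n)))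
    fun m n => by rw [Set.inter_comm]]
  simp_rw [Set.inter_self]
  calc ∑ n ∈ range N, volume (closedBall (n • a) (ψ n)) + 2 • ∑ n ∈ range N,
        ∑ m ∈ range N with n < m,
          volume (closedBall (m • a) (ψ m) ∩ closedBall (n • a) (ψ n))
      ≤ ENNReal.ofReal (2 * T) + 2 • ∑ n ∈ range N, ENNReal.ofReal (8 / c * ψ n * T) := by
        rw [hS]
        gcongr with n
        exact sum_volume_closedBall_nsmul_inter_le hc hbad hpos hanti N n
    _ = ENNReal.ofReal (2 * T + 16 / c * T ^ 2) := by
        have hsum : ∑ n ∈ range N, ENNReal.ofReal (8 / c * ψ n * T)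
            = ENNReal.ofReal (8 / c * T * T) := by
          rw [← ENNReal.ofReal_sum_of_nonneg fun n _ => by have := hψ0 n; positivity, ← sum_mul,
            ← mul_sum]
        rw [hsum, two_nsmul, ← ENNReal.ofReal_add (by positivity) (by positivity),
          ← ENNReal.ofReal_add (by positivity) (by positivity)]
        ring_nf
    _ ≤ ENNReal.ofReal ((1 + 4 / c) * (2 * T) ^ 2) := by
        refine ENNReal.ofReal_le_ofReal ?_
        have : (1 + 4 / c) * (2 * T) ^ 2 = 2 * T + 16 / c * T ^ 2 + 2 * T * (2 * T - 1) := by ring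
        nlinarith
    _ = (1 + ENNReal.ofReal (4 / c)) * (∑ n ∈ range N, volume (closedBall (n • a) (ψ n))) ^ 2 := by
        rw [hS, ENNReal.ofReal_mul (by positivity), ENNReal.ofReal_add zero_le_one (by positivity),
          ENNReal.ofReal_one, ENNReal.ofReal_pow (by positivity)]

theorem volume_setOf_frequently_mem_closedBall_nsmul_pos (hc : 0 < c)
    (hbad : ∀ k : ℕ, 0 < k → c / k < ‖k • a‖) (hpos : ∀ n, 0 < ψ n) (hanti : Antitone ψ)
    (hhalf : ∀ n, ψ n ≤ 1 / 2) (hdiv : ¬Summable ψ) :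
    0 < volume {y | ∃ᶠ n in atTop, y ∈ closedBall (n • a) (ψ n)} := by
  have hT := (not_summable_iff_tendsto_nat_atTop_of_nonneg fun n => (hpos n).le).1 hdiv
  have hS : Tendsto (fun N => ∑ n ∈ range N, volume (closedBall (n • a) (ψ n))) atTop (𝓝 ∞) := by
    refine (ENNReal.tendsto_ofReal_atTop.comp (hT.const_mul_atTop two_pos)).congr fun N => ?_
    rw [Function.comp_apply, mul_sum, ENNReal.ofReal_sum_of_nonneg fun n _ => by
      linarith [hpos n]]
    exact sum_congr rfl fun n _ => (UnitAddCircle.volume_closedBall_of_le_half _ (hhalf n)).symm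
  have : IsProbabilityMeasure (volume : Measure UnitAddCircle) := ⟨UnitAddCircle.measure_univ⟩
  refine lt_of_lt_of_le ?_ (inv_four_mul_le_measure_setOf_frequently_mem
    (fun n => measurableSet_closedBall) hS ((hT.eventually_ge_atTop (1 / 2)).mono fun N hN =>
      sum_sum_volume_closedBall_nsmul_inter_le hc hbad hpos hanti hhalf hN))
  exact ENNReal.inv_pos.2 (ENNReal.mul_ne_top ENNReal.ofNat_ne_top
    (ENNReal.add_ne_top.2 ⟨ENNReal.one_ne_top, ENNReal.ofReal_ne_top⟩))

theorem ae_frequently_mem_closedBall_nsmul_of_volume_pos (ha : addOrderOf a = 0)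
    (hanti : Antitone ψ) (hpos : 0 < volume {y | ∃ᶠ n in atTop, y ∈ closedBall (n • a) (ψ n)}) :
    ∀ᵐ y, ∃ᶠ n in atTop, y ∈ closedBall (n • a) (ψ n) := by
  set s := {y | ∃ᶠ n in atTop, y ∈ closedBall (n • a) (ψ n)}
  have hs : MeasurableSet s := by
    have : s = limsup (fun n => closedBall (n • a) (ψ n)) atTop :=
      Set.ext fun y => mem_limsup_iff_frequently_mem.symm
    exact this ▸ MeasurableSet.measurableSet_limsup fun n => measurableSet_closedBall
  -- rotating by `a` shifts the ball centres by one step, and the radii decrease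
  have hinv : (a + ·) ⁻¹' s ⊆ s := by
    intro y hy
    refine (tendsto_sub_atTop_nat 1).frequently
      (((hy : ∃ᶠ n in atTop, a + y ∈ closedBall (n • a) (ψ n)).and_eventually
        (eventually_ge_atTop 1)).mono ?_)
    rintro n ⟨hn, h1⟩
    rw [mem_closedBall, ← Nat.sub_add_cancel h1, succ_nsmul', dist_add_left] at hn
    exact mem_closedBall.2 (hn.trans (hanti (Nat.le_succ _)))
  rcases (AddCircle.ergodic_add_left.2 ha).ae_empty_or_univ_of_preimage_ae_le
    hs.nullMeasurableSet hinv.eventuallyLE with h | h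
  · exact absurd (ae_eq_empty.1 h) hpos.ne'
  · exact ae_eq_univ.1 h

theorem not_summable_min_of_not_summable {f : ℕ → ℝ} (hf : ¬Summable f) {b : ℝ} (hb : 0 < b) :
    ¬Summable fun n => min (f n) b := by
  refine fun h => hf (h.congr_cofinite ?_)
  rw [Nat.cofinite_eq_atTop]
  filter_upwards [h.tendsto_atTop_zero.eventually (gt_mem_nhds hb)] with n hn
  exact min_eq_left ((min_lt_iff.1 hn).resolve_right (lt_irrefl b)).le

theorem ae_frequently_mem_closedBall_nsmul (hc : 0 < c)
    (hbad : ∀ k : ℕ, 0 < k → c / k < ‖k • a‖) (hpos : ∀ n, 0 < ψ n) (hanti : Antitone ψ)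
    (hdiv : ¬Summable ψ) :
    ∀ᵐ y, ∃ᶠ n in atTop, y ∈ closedBall (n • a) (ψ n) := by
  have ha : addOrderOf a = 0 := addOrderOf_eq_zero_iff'.2 fun k hk h0 => by
    have := (div_pos hc (Nat.cast_pos.2 hk)).trans (hbad k hk)
    rw [h0, norm_zero] at this
    exact this.false
  set ψ' := fun n => min (ψ n) (1 / 2)
  have hanti' : Antitone ψ' := fun m n h => min_le_min_right _ (hanti h)
  filter_upwards [ae_frequently_mem_closedBall_nsmul_of_volume_pos ha hanti'
    (volume_setOf_frequently_mem_closedBall_nsmul_pos hc hbad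
      (fun n => lt_min (hpos n) one_half_pos) hanti' (fun n => min_le_right _ _)
      (not_summable_min_of_not_summable hdiv one_half_pos))]
    with y hy
  exact hy.mono fun n hn => closedBall_subset_closedBall (min_le_left _ _) hn

end Circle

theorem abs_sin_two_pi_mul_sub_sin_two_pi_mul_le (u v : ℝ) :
    |sin (2 * π * u) - sin (2 * π * v)| ≤ 2 * π * dist (u : UnitAddCircle) v := by
  rw [dist_eq_norm, ← QuotientAddGroup.mk_sub, UnitAddCircle.norm_eq]
  set w := u - v - round (u - v)
  rw [show 2 * π * u = 2 * π * (v + w) + round (u - v) * (2 * π) by simp only [w]; ring,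
    sin_add_int_mul_two_pi]
  calc |sin (2 * π * (v + w)) - sin (2 * π * v)| ≤ |2 * π * (v + w) - 2 * π * v| :=
        abs_sin_sub_sin_le _ _
    _ = 2 * π * |w| := by rw [show 2 * π * (v + w) - 2 * π * v = 2 * π * w by ring, abs_mul,
        abs_of_pos two_pi_pos]

theorem ae_restrict_Ioo_exists_sin_two_pi_mul_eq {s : ℝ} (hs : 0 < s) {p : UnitAddCircle → Prop}
    (hp : ∀ᵐ y, p y) :
    ∀ᵐ x ∂volume.restrict (Set.Ioo (-(1 / s)) (1 / s)),
      ∃ t : ℝ, sin (2 * π * t) = x * s ∧ p t := by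
  set B := ((↑) : ℝ → UnitAddCircle) ⁻¹' {y | p y}ᶜ ∩ Set.Ioc (-(1 / 2)) (1 / 2)
  have hB : volume B = 0 := by
    have h := (UnitAddCircle.measurePreserving_mk (-(1 / 2))).measure_preimage
      (NullMeasurableSet.of_null hp)
    rw [Measure.restrict_apply' measurableSet_Ioc, show -(1 / 2) + 1 = (1 / 2 : ℝ) by norm_num] at h
    exact h.trans hp
  -- every bad `x` is the image of a bad point of `B` under `t ↦ sin (2πt) / s`
  have himage : volume ((fun t => sin (2 * π * t) / s) '' B) = 0 :=
    addHaar_image_eq_zero_of_differentiableOn_of_addHaar_eq_zero volume (by fun_prop) hB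
  rw [ae_restrict_iff' measurableSet_Ioo, ae_iff]
  refine measure_mono_null (fun x hx => ?_) himage
  obtain ⟨⟨hx1, hx2⟩, hx⟩ := Classical.not_imp.1 hx
  have hxs : |x * s| ≤ 1 := by
    rw [abs_mul, abs_of_pos hs, ← le_div_iff₀ hs]
    exact (abs_lt.2 ⟨hx1, hx2⟩).le
  set t := arcsin (x * s) / (2 * π)
  have hsin : sin (2 * π * t) = x * s := by
    rw [mul_div_cancel₀ _ two_pi_pos.ne', sin_arcsin (abs_le.1 hxs).1 (abs_le.1 hxs).2]
  have ht1 := neg_pi_div_two_le_arcsin (x * s)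
  have ht2 := arcsin_le_pi_div_two (x * s)
  refine ⟨t, ⟨fun ht => hx ⟨t, hsin, ht⟩, ?_, ?_⟩, ?_⟩
  · rw [lt_div_iff₀ two_pi_pos]; linarith [pi_pos]
  · rw [div_le_iff₀ two_pi_pos]; linarith [pi_pos]
  · simp only [hsin, mul_div_cancel_right₀ _ hs.ne']

/-- Let `θ ∈ (0, π)` be such that `θ/(2π)` is badly approximable, i.e. there
exists `c > 0` with `‖n·θ/(2π)‖ > c/n` for all positive integers `n` (distance to a nearest
integer), and let `φ : ℕ → (0, ∞)` be decreasing with `∑ φ(n) = ∞`. Then for Lebesgue-almost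
every `x ∈ (−1/sin θ, 1/sin θ)` there are infinitely many positive integers `m` with
`|sin((m+1)θ)/sin θ − x| < (2π/sin θ)·φ(m)`. -/
theorem statement8 (θ : ℝ) (hθ : θ ∈ Set.Ioo 0 π) (c : ℝ) (hc : 0 < c)
    (hbad : ∀ n : ℕ, 0 < n →
      c / n < |(n : ℝ) * (θ / (2 * π)) - round ((n : ℝ) * (θ / (2 * π)))|)
    (φ : ℕ → ℝ) (hφpos : ∀ n, 0 < φ n) (hφmono : Antitone φ) (hφdiv : ¬ Summable φ) :
    ∀ᵐ x ∂(MeasureTheory.volume.restrict (Set.Ioo (-(1 / Real.sin θ)) (1 / Real.sin θ))),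
      {m : ℕ | 0 < m ∧
        |Real.sin ((m + 1) * θ) / Real.sin θ - x| < (2 * π / Real.sin θ) * φ m}.Infinite := by
  have hsθ : 0 < sin θ := sin_pos_of_pos_of_lt_pi hθ.1 hθ.2
  set α := θ / (2 * π) with hα
  have hna : ∀ n : ℕ, n • (α : UnitAddCircle) = ((n * α : ℝ) : UnitAddCircle) := fun n => by
    rw [← AddCircle.coe_nsmul, nsmul_eq_mul]
  have hcircle := ae_frequently_mem_closedBall_nsmul hc
    (fun k hk => by rw [hna, UnitAddCircle.norm_eq]; exact hbad k hk)
    (fun n => half_pos (hφpos n)) (fun m n h => div_le_div_of_nonneg_right (hφmono h) two_pos.le)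
    (fun h => hφdiv ((summable_div_const_iff two_ne_zero).1 h))
  filter_upwards [ae_restrict_Ioo_exists_sin_two_pi_mul_eq hsθ hcircle] with x ⟨t, hxt, ht⟩
  rw [← Nat.frequently_atTop_iff_infinite]
  refine (tendsto_sub_atTop_nat 1).frequently ((ht.and_eventually (eventually_ge_atTop 2)).mono ?_)
  rintro n ⟨hn, h2⟩
  have hclose : |sin (n * θ) - x * sin θ| ≤ π * φ n := by
    have h := abs_sin_two_pi_mul_sub_sin_two_pi_mul_le (n * α) t
    rw [hxt, ← hna, dist_comm, show 2 * π * (n * α) = n * θ by rw [hα]; field_simp] at h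
    nlinarith [mem_closedBall.1 hn, pi_pos]
  refine ⟨by omega, ?_⟩
  rw [Nat.cast_sub (by omega : 1 ≤ n), Nat.cast_one, sub_add_cancel,
    show sin (n * θ) / sin θ - x = (sin (n * θ) - x * sin θ) / sin θ by field_simp, abs_div,
    abs_of_pos hsθ, div_mul_eq_mul_div, div_lt_div_iff_of_pos_right hsθ]
  refine hclose.trans_lt ?_
  nlinarith [hφmono (Nat.sub_le n 1), hφpos n, pi_pos]
end

section
/- Let θ ∈ (0, π), let δ ∈ (0, 1/8), and let γ ∈ (0, 1/4) be such that for every positive integer m the three inequalities ‖(m+1)·θ/(2π) − δ‖ > γ/(m+1), ‖(m+1)·θ/(2π) − 1/2 + δ‖ > γ/(m+1), and ‖(m+1)·θ/(2π) + 1/2 + δ‖ > γ/(m+1) hold. Then for every positive integer m, |sin((m+1)θ) − sin(2πδ)| > (2γ²π²/(m+1)²)·(1 − γ²π²/(6(m+1)²))². -/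
/-!
Write `x = (m+1)θ/(2π)`. By the sum-to-product formula,
`sin((m+1)θ) - sin(2πδ) = 2 sin(π(x - δ)) sin(π(x + 1/2 + δ))`, and `|sin(πy)| = sin(π‖y‖)`.
Since `sin` increases on `[0, π/2]`, the hypotheses on `‖x - δ‖` and `‖x + 1/2 + δ‖` bound both
factors below by `sin(πγ/(m+1)) ≥ πγ/(m+1) - (πγ/(m+1))³/6`.
-/

open Real

theorem abs_sin_pi_mul_eq_sin_pi_mul_abs_sub_round (y : ℝ) :
    |sin (π * y)| = sin (π * |y - round y|) := by
  have h_shift : sin (π * y) = (-1) ^ round y * sin (π * (y - round y)) := by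
    rw [← sin_add_int_mul_pi]
    ring_nf
  have h_sign : |(-1 : ℝ) ^ round y| = 1 := by
    rcases Int.even_or_odd (round y) with he | he
    · rw [he.neg_one_zpow, abs_one]
    · rw [he.neg_one_zpow, abs_neg, abs_one]
  have h_even : |sin (π * (y - round y))| = |sin (π * |y - round y|)| := by
    rcases abs_choice (y - round y) with h | h <;> rw [h]
    rw [mul_neg, sin_neg, abs_neg]
  have h_nonneg : 0 ≤ sin (π * |y - round y|) :=
    sin_nonneg_of_nonneg_of_le_pi (by positivity)
      (by nlinarith [pi_pos, abs_sub_round y])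
  rw [h_shift, abs_mul, h_sign, one_mul, h_even, abs_of_nonneg h_nonneg]

theorem sin_pi_mul_lt_abs_sin_pi_mul {a y : ℝ} (ha : 0 ≤ a) (hay : a < |y - round y|) :
    sin (π * a) < |sin (π * y)| := by
  rw [abs_sin_pi_mul_eq_sin_pi_mul_abs_sub_round]
  have h_half : |y - round y| ≤ 1 / 2 := abs_sub_round y
  refine strictMonoOn_sin ⟨?_, ?_⟩ ⟨?_, ?_⟩ (mul_lt_mul_of_pos_left hay pi_pos) <;>
    nlinarith [pi_pos]

theorem sin_sub_sin_eq_two_mul_sin_pi_mul_mul_sin_pi_mul (x δ : ℝ) :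
    sin (2 * π * x) - sin (2 * π * δ) =
      2 * sin (π * (x - δ)) * sin (π * (x + 1 / 2 + δ)) := by
  rw [sin_sub_sin, ← sin_add_pi_div_two]
  ring_nf

theorem two_mul_sin_sq_lt_abs_sin_sub_sin {a x δ : ℝ} (ha : 0 ≤ a)
    (h_sub : a < |(x - δ) - round (x - δ)|)
    (h_add : a < |(x + 1 / 2 + δ) - round (x + 1 / 2 + δ)|) :
    2 * sin (π * a) ^ 2 < |sin (2 * π * x) - sin (2 * π * δ)| := by
  rw [sin_sub_sin_eq_two_mul_sin_pi_mul_mul_sin_pi_mul, abs_mul, abs_mul, abs_two]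
  have h_pos : 0 ≤ sin (π * a) :=
    sin_nonneg_of_nonneg_of_le_pi (by positivity)
      (by nlinarith [pi_pos, abs_sub_round (x - δ)])
  have h₁ := sin_pi_mul_lt_abs_sin_pi_mul ha h_sub
  have h₂ := sin_pi_mul_lt_abs_sin_pi_mul ha h_add
  nlinarith [mul_lt_mul'' h₁ h₂ h_pos h_pos]

theorem sub_cube_div_six_sq_le_sin_sq {z : ℝ} (hz : 0 ≤ z) (hz2 : z ≤ 2) :
    (z - z ^ 3 / 6) ^ 2 ≤ sin z ^ 2 := by
  have h_nonneg : 0 ≤ z - z ^ 3 / 6 := by nlinarith [mul_nonneg hz hz]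
  exact pow_le_pow_left₀ h_nonneg (sin_ge_sub_cube hz) 2

theorem statement9_general (θ δ γ : ℝ)
    (hγ : γ ∈ Set.Ioo 0 (1 / 4))
    (h1 : ∀ m : ℕ, 0 < m → γ / (m + 1) <
      |((m + 1 : ℝ) * (θ / (2 * π)) - δ) - round ((m + 1 : ℝ) * (θ / (2 * π)) - δ)|)
    (h3 : ∀ m : ℕ, 0 < m → γ / (m + 1) <
      |((m + 1 : ℝ) * (θ / (2 * π)) + 1 / 2 + δ) -
        round ((m + 1 : ℝ) * (θ / (2 * π)) + 1 / 2 + δ)|) :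
    ∀ m : ℕ, 0 < m →
      2 * γ ^ 2 * π ^ 2 / (m + 1 : ℝ) ^ 2 * (1 - γ ^ 2 * π ^ 2 / (6 * (m + 1 : ℝ) ^ 2)) ^ 2
        < |Real.sin ((m + 1) * θ) - Real.sin (2 * π * δ)| := by
  intro m hm
  have hn : (0 : ℝ) < m + 1 := by positivity
  have ha : 0 ≤ γ / (m + 1) := div_nonneg hγ.1.le hn.le
  have h_bound := two_mul_sin_sq_lt_abs_sin_sub_sin ha (h1 m hm) (h3 m hm)
  have h_angle : 2 * π * ((m + 1 : ℝ) * (θ / (2 * π))) = (m + 1) * θ := by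
    field_simp
  have h_small : π * (γ / (m + 1)) ≤ 2 := by
    nlinarith [pi_lt_d2, abs_sub_round ((m + 1 : ℝ) * (θ / (2 * π)) - δ), h1 m hm]
  have h_taylor := sub_cube_div_six_sq_le_sin_sq (by positivity) h_small
  have h_lhs : 2 * γ ^ 2 * π ^ 2 / (m + 1 : ℝ) ^ 2 * (1 - γ ^ 2 * π ^ 2 / (6 * (m + 1 : ℝ) ^ 2)) ^ 2
      = 2 * (π * (γ / (m + 1)) - (π * (γ / (m + 1))) ^ 3 / 6) ^ 2 := by
    field_simp
  rw [h_angle] at h_bound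
  linarith

/-- Let `θ ∈ (0, π)`, `δ ∈ (0, 1/8)`, and `γ ∈ (0, 1/4)` be such that for every
positive integer `m` the three inequalities `‖(m+1)·θ/(2π) − δ‖ > γ/(m+1)`,
`‖(m+1)·θ/(2π) − 1/2 + δ‖ > γ/(m+1)`, and `‖(m+1)·θ/(2π) + 1/2 + δ‖ > γ/(m+1)` hold (with
`‖·‖` the distance to a nearest integer). Then for every positive integer `m`,
`|sin((m+1)θ) − sin(2πδ)| > (2γ²π²/(m+1)²)·(1 − γ²π²/(6(m+1)²))²`. -/
theorem statement9 (θ δ γ : ℝ) (hθ : θ ∈ Set.Ioo 0 π) (hδ : δ ∈ Set.Ioo 0 (1 / 8))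
    (hγ : γ ∈ Set.Ioo 0 (1 / 4))
    (h1 : ∀ m : ℕ, 0 < m → γ / (m + 1) <
      |((m + 1 : ℝ) * (θ / (2 * π)) - δ) - round ((m + 1 : ℝ) * (θ / (2 * π)) - δ)|)
    (h2 : ∀ m : ℕ, 0 < m → γ / (m + 1) <
      |((m + 1 : ℝ) * (θ / (2 * π)) - 1 / 2 + δ) -
        round ((m + 1 : ℝ) * (θ / (2 * π)) - 1 / 2 + δ)|)
    (h3 : ∀ m : ℕ, 0 < m → γ / (m + 1) <
      |((m + 1 : ℝ) * (θ / (2 * π)) + 1 / 2 + δ) -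
        round ((m + 1 : ℝ) * (θ / (2 * π)) + 1 / 2 + δ)|) :
    ∀ m : ℕ, 0 < m →
      2 * γ ^ 2 * π ^ 2 / (m + 1 : ℝ) ^ 2 * (1 - γ ^ 2 * π ^ 2 / (6 * (m + 1 : ℝ) ^ 2)) ^ 2
        < |Real.sin ((m + 1) * θ) - Real.sin (2 * π * δ)| :=
  statement9_general θ δ γ hγ h1 h3
end

section
/- For a real number α, define Bad^∨_α = {x ∈ ℝ : inf_{m≥1} m·‖m·α − x‖ > 0}. Let θ ∈ (0, π) and let δ ∈ (0, 1/8) be such that δ ∈ Bad^∨_{θ/(2π)}, 1/2 − δ ∈ Bad^∨_{θ/(2π)}, and −1/2 − δ ∈ Bad^∨_{θ/(2π)}. Then there exists a constant c > 0 such that |sin((m+1)θ)/sin θ − sin(2πδ)/sin θ| > c/(m+1)² for every positive integer m. -/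
open Real

/-- The set of twisted badly approximable numbers for `α`:
`Bad^∨_α = {x ∈ ℝ : inf_{m≥1} m·‖m·α − x‖ > 0}`, where `‖·‖` is the distance to a nearest
integer. -/
def badVee (α : ℝ) : Set ℝ :=
  {x : ℝ | ∃ ε > (0 : ℝ), ∀ m : ℕ, 0 < m →
    ε ≤ (m : ℝ) * |((m : ℝ) * α - x) - round ((m : ℝ) * α - x)|}

/-! With `α = θ/(2π)` and `n = m + 1`, the sum-to-product formula gives
`|sin(nθ) − sin(2πδ)| = 2 |sin(π(nα − δ))| |sin(π(nα − (1/2 − δ))|`.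
Jordan's inequality `|sin(πu)| ≥ 2‖u‖` and the hypotheses `δ, 1/2 − δ ∈ Bad^∨_α` bound each
factor below by a constant over `n`, so the difference is at least a constant over `n²`. -/

lemma abs_sin_sub_sin (x y : ℝ) :
    |sin x - sin y| = 2 * |sin ((x - y) / 2)| * |sin ((x + y - π) / 2)| := by
  have hcos : cos ((x + y) / 2) = -sin ((x + y - π) / 2) := by
    rw [← cos_add_pi_div_two]
    ring_nf
  rw [sin_sub_sin, hcos, abs_mul, abs_mul, abs_neg, abs_two]

lemma abs_sin_pi_mul_sub_round (u : ℝ) : |sin (π * (u - round u))| = |sin (π * u)| := by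
  rw [mul_sub, mul_comm π (round u : ℝ), sin_sub_int_mul_pi, abs_mul, abs_zpow, abs_neg, abs_one,
    one_zpow, one_mul]

lemma two_mul_abs_le_abs_sin_pi_mul {v : ℝ} (hv : |v| ≤ 1 / 2) : 2 * |v| ≤ |sin (π * v)| := by
  have hsymm : |sin (π * v)| = |sin (π * |v|)| := by
    rcases abs_cases v with ⟨h, -⟩ | ⟨h, -⟩ <;> simp [h]
  have hjordan := mul_le_sin (x := π * |v|) (by positivity) (by nlinarith [pi_pos])
  rw [hsymm, abs_of_nonneg (a := sin (π * |v|)) (le_trans (by positivity) hjordan)]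
  calc 2 * |v| = 2 / π * (π * |v|) := by field_simp
    _ ≤ sin (π * |v|) := hjordan

lemma two_mul_abs_sub_round_le_abs_sin_pi_mul (u : ℝ) :
    2 * |u - round u| ≤ |sin (π * u)| :=
  abs_sin_pi_mul_sub_round u ▸ two_mul_abs_le_abs_sin_pi_mul (abs_sub_round u)

lemma exists_div_le_abs_sin_of_mem_badVee {α x : ℝ} (hx : x ∈ badVee α) :
    ∃ ε > 0, ∀ n : ℕ, 0 < n → ε / n ≤ |sin (π * (n * α - x))| := by
  obtain ⟨ε, hε, hbad⟩ := hx
  refine ⟨2 * ε, by positivity, fun n hn => ?_⟩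
  have hn' : (0 : ℝ) < n := Nat.cast_pos.mpr hn
  calc 2 * ε / n ≤ 2 * |(n * α - x) - round (n * α - x)| := by
        rw [div_le_iff₀ hn']
        nlinarith [hbad n hn]
    _ ≤ |sin (π * (n * α - x))| := two_mul_abs_sub_round_le_abs_sin_pi_mul _

theorem statement10_general (θ δ : ℝ) (hθ : θ ∈ Set.Ioo 0 π)
    (hb1 : δ ∈ badVee (θ / (2 * π)))
    (hb2 : 1 / 2 - δ ∈ badVee (θ / (2 * π))) :
    ∃ c > (0 : ℝ), ∀ m : ℕ, 0 < m →
      c / (m + 1 : ℝ) ^ 2 <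
        |Real.sin ((m + 1) * θ) / Real.sin θ - Real.sin (2 * π * δ) / Real.sin θ| := by
  obtain ⟨ε₁, hε₁, h₁⟩ := exists_div_le_abs_sin_of_mem_badVee hb1
  obtain ⟨ε₂, hε₂, h₂⟩ := exists_div_le_abs_sin_of_mem_badVee hb2
  have hsinθ : 0 < sin θ := sin_pos_of_pos_of_lt_pi hθ.1 hθ.2
  refine ⟨ε₁ * ε₂ / sin θ, by positivity, fun m _ => ?_⟩
  set n : ℝ := (m : ℝ) + 1
  have hsplit : |sin (n * θ) - sin (2 * π * δ)| =
      2 * |sin (π * (n * (θ / (2 * π)) - δ))| * |sin (π * (n * (θ / (2 * π)) - (1 / 2 - δ)))| := by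
    rw [abs_sin_sub_sin]
    congr 4
    · field_simp
    · field_simp
      ring_nf
  have hlower : 2 * (ε₁ / n) * (ε₂ / n) ≤ |sin (n * θ) - sin (2 * π * δ)| := by
    have b₁ := h₁ (m + 1) m.succ_pos
    have b₂ := h₂ (m + 1) m.succ_pos
    push_cast at b₁ b₂
    rw [hsplit]
    gcongr
  rw [div_sub_div_same, abs_div, abs_of_pos hsinθ, div_right_comm,
    div_lt_div_iff_of_pos_right hsinθ]
  have hpos : 0 < ε₁ * ε₂ / n ^ 2 := by positivity
  calc ε₁ * ε₂ / n ^ 2 < 2 * (ε₁ * ε₂ / n ^ 2) := by linarith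
    _ = 2 * (ε₁ / n) * (ε₂ / n) := by field_simp
    _ ≤ |sin (n * θ) - sin (2 * π * δ)| := hlower

/-- Let `θ ∈ (0, π)` and let `δ ∈ (0, 1/8)` be such that `δ ∈ Bad^∨_{θ/(2π)}`,
`1/2 − δ ∈ Bad^∨_{θ/(2π)}`, and `−1/2 − δ ∈ Bad^∨_{θ/(2π)}`. Then there exists a constant
`c > 0` such that `|sin((m+1)θ)/sin θ − sin(2πδ)/sin θ| > c/(m+1)²` for every positive
integer `m`. -/
theorem statement10 (θ δ : ℝ) (hθ : θ ∈ Set.Ioo 0 π) (hδ : δ ∈ Set.Ioo 0 (1 / 8))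
    (hb1 : δ ∈ badVee (θ / (2 * π)))
    (hb2 : 1 / 2 - δ ∈ badVee (θ / (2 * π)))
    (hb3 : -(1 / 2) - δ ∈ badVee (θ / (2 * π))) :
    ∃ c > (0 : ℝ), ∀ m : ℕ, 0 < m →
      c / (m + 1 : ℝ) ^ 2 <
        |Real.sin ((m + 1) * θ) / Real.sin θ - Real.sin (2 * π * δ) / Real.sin θ| :=
  statement10_general θ δ hθ hb1 hb2
end

section
/- Let θ ∈ (0, π). The set {x ∈ (0, 1/(2 sin θ)) : there exists γ > 0 such that |sin((m+1)θ)/sin θ − x| > γ/m² for all positive integers m} has Hausdorff dimension 1. -/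
/-!
Let `a m = sin((m+1)θ)/sin θ`. A point `x` fails the defining condition only if for every
`γ > 0` it lies in some interval of length `2γ/m²` around some `a m`; these intervals have total
length `2γ ∑ 1/m²`, which tends to `0` with `γ`. So, apart from a Lebesgue-null set, every point
of the nonempty interval `(0, 1/(2 sin θ))` belongs to the set, which therefore has positive
Lebesgue measure, i.e. positive `1`-dimensional Hausdorff measure, and hence dimension `1`.
-/

open Real MeasureTheory Filter Topology Set

def wellApproximableBy (a ψ : ℕ → ℝ) : Set ℝ :=
  {x | ∀ γ > 0, ∃ m, |x - a m| ≤ γ * ψ m}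

theorem volume_wellApproximableBy_le (a : ℕ → ℝ) {ψ : ℕ → ℝ} (hψ : Summable ψ)
    (hψ0 : ∀ m, 0 ≤ ψ m) {γ : ℝ} (hγ : 0 < γ) :
    volume (wellApproximableBy a ψ) ≤ ENNReal.ofReal (2 * γ * ∑' m, ψ m) := by
  have hcover : wellApproximableBy a ψ ⊆ ⋃ m, Metric.closedBall (a m) (γ * ψ m) := fun x hx => by
    obtain ⟨m, hm⟩ := hx γ hγ
    exact mem_iUnion.2 ⟨m, by rwa [Metric.mem_closedBall, Real.dist_eq]⟩
  calc volume (wellApproximableBy a ψ)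
      ≤ ∑' m, volume (Metric.closedBall (a m) (γ * ψ m)) :=
        (measure_mono hcover).trans (measure_iUnion_le _)
    _ = ∑' m, ENNReal.ofReal (2 * γ * ψ m) := by simp only [Real.volume_closedBall, mul_assoc]
    _ = ENNReal.ofReal (2 * γ * ∑' m, ψ m) := by
        rw [← ENNReal.ofReal_tsum_of_nonneg (fun m => by have := hψ0 m; positivity)
          (hψ.mul_left _), tsum_mul_left]

theorem volume_wellApproximableBy_eq_zero (a : ℕ → ℝ) {ψ : ℕ → ℝ} (hψ : Summable ψ)
    (hψ0 : ∀ m, 0 ≤ ψ m) : volume (wellApproximableBy a ψ) = 0 := by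
  have hlim : Tendsto (fun γ : ℝ => ENNReal.ofReal (2 * γ * ∑' m, ψ m)) (𝓝[>] 0) (𝓝 0) := by
    have hcont : Continuous fun γ : ℝ => ENNReal.ofReal (2 * γ * ∑' m, ψ m) :=
      ENNReal.continuous_ofReal.comp (by fun_prop)
    simpa using (hcont.tendsto 0).mono_left nhdsWithin_le_nhds
  exact nonpos_iff_eq_zero.1 <| ge_of_tendsto hlim <|
    eventually_nhdsWithin_of_forall fun γ hγ => volume_wellApproximableBy_le a hψ hψ0 hγ

theorem Real.dimH_eq_one_of_volume_ne_zero {s : Set ℝ} (hs : volume s ≠ 0) : dimH s = 1 := by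
  refine le_antisymm ((dimH_mono (subset_univ s)).trans_eq Real.dimH_univ) ?_
  have hH : μH[((1 : NNReal) : ℝ)] s ≠ 0 := by rwa [NNReal.coe_one, hausdorffMeasure_real]
  simpa using le_dimH_of_hausdorffMeasure_ne_zero hH

/-- Let `θ ∈ (0, π)`. The set of `x ∈ (0, 1/(2 sin θ))` for which there exists
`γ > 0` such that `|sin((m+1)θ)/sin θ − x| > γ/m²` for all positive integers `m` has
Hausdorff dimension `1`. -/
theorem statement11 (θ : ℝ) (hθ : θ ∈ Set.Ioo 0 π) :
    dimH {x : ℝ | x ∈ Set.Ioo 0 (1 / (2 * Real.sin θ)) ∧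
      ∃ γ > (0 : ℝ), ∀ m : ℕ, 0 < m →
        γ / (m : ℝ) ^ 2 < |Real.sin ((m + 1) * θ) / Real.sin θ - x|} = 1 := by
  set a : ℕ → ℝ := fun m => Real.sin ((m + 1) * θ) / Real.sin θ
  -- `1 / 0 ^ 2 = 0`, so the index `m = 0` only adds the single point `a 0` to `W`.
  set W := wellApproximableBy a fun m => 1 / (m : ℝ) ^ 2
  have hW : volume W = 0 :=
    volume_wellApproximableBy_eq_zero a (Real.summable_one_div_nat_pow.2 one_lt_two)
      fun m => by positivity
  have hsub : Ioo 0 (1 / (2 * Real.sin θ)) \ W ⊆ {x | x ∈ Ioo 0 (1 / (2 * Real.sin θ)) ∧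
      ∃ γ > (0 : ℝ), ∀ m : ℕ, 0 < m → γ / (m : ℝ) ^ 2 < |a m - x|} := by
    rintro x ⟨hx, hxW⟩
    simp only [W, wellApproximableBy, mem_ofPred_eq, not_forall, not_exists, not_le] at hxW
    obtain ⟨γ, hγ, hfar⟩ := hxW
    refine ⟨hx, γ, hγ, fun m _ => ?_⟩
    rw [abs_sub_comm, div_eq_mul_one_div]
    exact hfar m
  have hsin : 0 < Real.sin θ := Real.sin_pos_of_pos_of_lt_pi hθ.1 hθ.2
  refine Real.dimH_eq_one_of_volume_ne_zero (ne_bot_of_le_ne_bot ?_ (measure_mono hsub))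
  rw [measure_sdiff_null hW, Real.volume_Ioo]
  simpa using hsin
end
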